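/- Let $E$ be a real Hilbert space, $\rho > 0$, $L > 0$, and $B_\rho = \{x \in E : \|x\| \le \rho\}$. Let $y$ be fixed and let $J : B_\rho \to \mathbb{R}$ be of class $C^1$ (the restriction of a $C^1$ function on an open convex set containing $B_\rho$) with derivative $J'$ Lipschitzian on $B_\rho$ with constant $L$. Suppose $\tilde{x}$ is a global minimum on $B_\rho$ of the function $x \mapsto J(x) + \frac{L}{2}\|x\|^2$ and that $\|\tilde{x}\| < \rho$. Then $\|\tilde{x}\| \ge \frac{\|J'(0)\|}{2L}$. -/

import Mathlib

/-!
Since `x̃` lies in the open ball, it is an interior minimum of `J + (L/2)‖·‖²`, so Fermat's rule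
gives `J'(x̃) = -L x̃`. The Lipschitz bound between `0` and `x̃` then yields
`‖J'(0)‖ ≤ ‖J'(0) - J'(x̃)‖ + ‖J'(x̃)‖ ≤ L‖x̃‖ + L‖x̃‖`.
-/

open Set Metric InnerProductSpace

section Gradient

variable {E : Type*} [NormedAddCommGroup E] [InnerProductSpace ℝ E] [CompleteSpace E]

theorem IsLocalMin.hasGradientAt_eq_zero {f : E → ℝ} {g x : E} (hmin : IsLocalMin f x)
    (hf : HasGradientAt f g x) : g = 0 :=
  (toDual ℝ E).map_eq_zero_iff.mp (hmin.hasFDerivAt_eq_zero hf.hasFDerivAt)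

theorem hasGradientAt_norm_sq (x : E) : HasGradientAt (fun y => ‖y‖ ^ 2) ((2 : ℝ) • x) x := by
  rw [hasGradientAt_iff_hasFDerivAt]
  refine (hasStrictFDerivAt_norm_sq x).hasFDerivAt.congr_fderiv ?_
  ext y
  simp

theorem HasGradientAt.add_mul_norm_sq {f : E → ℝ} {g x : E} (hf : HasGradientAt f g x) (c : ℝ) :
    HasGradientAt (fun y => f y + c / 2 * ‖y‖ ^ 2) (g + c • x) x := by
  have hsq := ((hasGradientAt_norm_sq x).hasFDerivAt).const_smul (c / 2)
  rw [hasGradientAt_iff_hasFDerivAt, map_add, map_smul]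
  refine (hf.hasFDerivAt.add hsq).congr_fderiv ?_
  rw [map_smul, smul_smul]
  congr 2
  ring

theorem eq_neg_smul_of_isLocalMin_add_mul_norm_sq {f : E → ℝ} {g x : E} {c : ℝ}
    (hf : HasGradientAt f g x) (hmin : IsLocalMin (fun y => f y + c / 2 * ‖y‖ ^ 2) x) :
    g = -(c • x) :=
  eq_neg_of_add_eq_zero_left (hmin.hasGradientAt_eq_zero (hf.add_mul_norm_sq c))

end Gradient

theorem statement9_general
    {E : Type*} [NormedAddCommGroup E] [InnerProductSpace ℝ E] [CompleteSpace E]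
    (ρ L : ℝ) (hL : 0 < L)
    (J : E → ℝ) (J' : E → E)
    -- `J` is of class `C¹` on `B_ρ` (gradients, via the Riesz identification)
    (hC1 : ∃ U : Set E, IsOpen U ∧ Convex ℝ U ∧ closedBall (0 : E) ρ ⊆ U ∧
      (∀ x ∈ U, HasGradientAt J (J' x) x) ∧ ContinuousOn J' U)
    -- `J'` is `L`-Lipschitzian on `B_ρ`
    (hlip : ∀ x ∈ closedBall (0 : E) ρ, ∀ u ∈ closedBall (0 : E) ρ,
      ‖J' x - J' u‖ ≤ L * ‖x - u‖)
    (xt : E)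
    (hmin : ∀ x ∈ closedBall (0 : E) ρ,
      J xt + L / 2 * ‖xt‖ ^ 2 ≤ J x + L / 2 * ‖x‖ ^ 2)
    (hlt : ‖xt‖ < ρ) :
    ‖J' 0‖ / (2 * L) ≤ ‖xt‖ := by
  obtain ⟨U, -, -, hBU, hgrad, -⟩ := hC1
  have hball : xt ∈ ball (0 : E) ρ := mem_ball_zero_iff.mpr hlt
  have hxt : xt ∈ closedBall (0 : E) ρ := ball_subset_closedBall hball
  have hloc : IsLocalMin (fun x => J x + L / 2 * ‖x‖ ^ 2) xt :=
    Filter.mem_of_superset (isOpen_ball.mem_nhds hball)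
      fun x hx => hmin x (ball_subset_closedBall hx)
  have hstat : J' xt = -(L • xt) :=
    eq_neg_smul_of_isLocalMin_add_mul_norm_sq (hgrad xt (hBU hxt)) hloc
  rw [div_le_iff₀ (by positivity)]
  calc ‖J' 0‖ ≤ ‖J' 0 - J' xt‖ + ‖J' xt‖ := norm_le_norm_sub_add _ _
    _ ≤ L * ‖0 - xt‖ + L * ‖xt‖ := by
        gcongr
        · exact hlip 0 (mem_closedBall_self (nonempty_ball.mp ⟨xt, hball⟩).le) xt hxt
        · rw [hstat, norm_neg, norm_smul, Real.norm_of_nonneg hL.le]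
    _ = ‖xt‖ * (2 * L) := by rw [zero_sub, norm_neg]; ring

/-- The key estimate in the proof of Corollary 2.4: if `x̃` is a global
minimum on `B_ρ` of `x ↦ J x + (L/2)‖x‖²` with `‖x̃‖ < ρ`, then
`‖x̃‖ ≥ ‖J'(0)‖ / (2L)`. -/
theorem statement9
    {E : Type*} [NormedAddCommGroup E] [InnerProductSpace ℝ E] [CompleteSpace E]
    (ρ L : ℝ) (hρ : 0 < ρ) (hL : 0 < L)
    (J : E → ℝ) (J' : E → E)
    -- `J` is of class `C¹` on `B_ρ` (gradients, via the Riesz identification)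
    (hC1 : ∃ U : Set E, IsOpen U ∧ Convex ℝ U ∧ closedBall (0 : E) ρ ⊆ U ∧
      (∀ x ∈ U, HasGradientAt J (J' x) x) ∧ ContinuousOn J' U)
    -- `J'` is `L`-Lipschitzian on `B_ρ`
    (hlip : ∀ x ∈ closedBall (0 : E) ρ, ∀ u ∈ closedBall (0 : E) ρ,
      ‖J' x - J' u‖ ≤ L * ‖x - u‖)
    (xt : E) (hxt : xt ∈ closedBall (0 : E) ρ)
    (hmin : ∀ x ∈ closedBall (0 : E) ρ,
      J xt + L / 2 * ‖xt‖ ^ 2 ≤ J x + L / 2 * ‖x‖ ^ 2)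
    (hlt : ‖xt‖ < ρ) :
    ‖J' 0‖ / (2 * L) ≤ ‖xt‖ :=
  statement9_general ρ L hL J J' hC1 hlip xt hmin hlt
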